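/- Let L, M, N ⊆ [m] with |L| + |M| + |N| ≥ 1, and let C = C(Δ_L, Δ_M, Δ_N). Then C is a minimal code; moreover, if |L| + |M| + |N| ≥ 3, then C is self-orthogonal. -/

import Mathlib

open Finset Polynomial
open scoped Classical

/-- `V m` is the vector space `F₂^m`. -/
abbrev V (m : ℕ) := Fin m → ZMod 2

/-- Dot product `x·y = Σ_i x_i y_i` in `F₂`. -/
def dot {m : ℕ} (x y : V m) : ZMod 2 := ∑ i, x i * y i

/-- `Supp v = {i : v i ≠ 0}`. -/
def supp {m : ℕ} (v : V m) : Finset (Fin m) := Finset.univ.filter fun i => v i ≠ 0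

/-- The simplicial complex `Δ_L = {v : Supp v ⊆ L}` generated by `L`. -/
def Δ {m : ℕ} (L : Finset (Fin m)) : Finset (V m) := Finset.univ.filter fun v => supp v ⊆ L

/-- Hamming weight of a vector. -/
def wtv {ι : Type} [Fintype ι] (c : ι → ZMod 2) : ℕ :=
  (Finset.univ.filter fun i => c i ≠ 0).card

/-- The linear functional `x ↦ x·y`. -/
noncomputable def dotL {m : ℕ} (y : V m) : V m →ₗ[ZMod 2] ZMod 2 :=
  ∑ i, LinearMap.smulRight (LinearMap.proj i) (y i)

/-- The linear map `(α,β,γ) ↦ ((d₁,d₂,d₃) ↦ α·d₁ + (β+γ)·d₂ + β·d₃)` whose range is the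
binary code `C(D₁,D₂,D₃)`. -/
noncomputable def codeMap {m : ℕ} (D₁ D₂ D₃ : Finset (V m)) :
    (V m × V m × V m) →ₗ[ZMod 2]
      (({x // x ∈ D₁} × {x // x ∈ D₂} × {x // x ∈ D₃}) → ZMod 2) :=
  LinearMap.pi fun d =>
    (dotL d.1.1).comp (LinearMap.fst (ZMod 2) (V m) (V m × V m))
    + (dotL d.2.1.1).comp
        (((LinearMap.fst (ZMod 2) (V m) (V m)).comp (LinearMap.snd (ZMod 2) (V m) (V m × V m)))
          + ((LinearMap.snd (ZMod 2) (V m) (V m)).comp (LinearMap.snd (ZMod 2) (V m) (V m × V m))))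
    + (dotL d.2.2.1).comp
        ((LinearMap.fst (ZMod 2) (V m) (V m)).comp (LinearMap.snd (ZMod 2) (V m) (V m × V m)))

lemma codeMap_apply {m : ℕ} (D₁ D₂ D₃ : Finset (V m)) (α β γ : V m)
    (d : {x // x ∈ D₁} × {x // x ∈ D₂} × {x // x ∈ D₃}) :
    codeMap D₁ D₂ D₃ (α, β, γ) d = dot α d.1.1 + dot (β + γ) d.2.1.1 + dot β d.2.2.1 := by
  simp [codeMap, dotL, dot, LinearMap.smulRight, mul_comm]

/-- A binary linear code (given as a set of codewords) is minimal if the support of a nonzero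
codeword never strictly contains the support of another nonzero codeword. -/
def IsMinimalCode {ι : Type} (C : Set (ι → ZMod 2)) : Prop :=
  ∀ u ∈ C, u ≠ 0 → ∀ v ∈ C, v ≠ 0 → Function.support v ⊆ Function.support u → v = u

/-- A binary code is self-orthogonal if any two codewords are orthogonal. -/
def IsSelfOrthogonal {ι : Type} [Fintype ι] (C : Set (ι → ZMod 2)) : Prop :=
  ∀ c ∈ C, ∀ c' ∈ C, ∑ i, c i * c' i = 0

/-!
Each of `Δ_L, Δ_M, Δ_N` is an `F₂`-subspace, so the index set `Δ_L × Δ_M × Δ_N` of the code is an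
`F₂`-space `W` and every codeword is a linear functional on `W`. Minimality: if `g ≠ f` and
`supp g ⊆ supp f`, choose `w` with `g w = 1` and `w'` with `g w' = 0`, `f w' = 1`; then
`g (w + w') = 1` but `f (w + w') = 0`. Self-orthogonality: once `|W| ≥ 8 > |F₂²|`, two linear
functionals `f, g` share a nonzero kernel vector `k`, and `w ↦ w + k` pairs up the terms of
`∑ f w g w` into equal pairs, which cancel in characteristic `2`.
-/

open Function

open scoped Matrix

section LinearFunctionalsOverF2

variable {W : Type*}

theorem AddMonoidHom.eq_of_support_subset_of_ne_zero [AddGroup W] {f g : W →+ ZMod 2}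
    (hg : g ≠ 0) (hsupp : support g ⊆ support f) : g = f := by
  by_contra hne
  have h01 : ∀ a : ZMod 2, a ≠ 0 → a = 1 := by decide
  obtain ⟨w, hw⟩ := DFunLike.ne_iff.mp hg
  obtain ⟨w', hw'⟩ := DFunLike.ne_iff.mp hne
  have hgw' : g w' = 0 := by
    by_contra h
    exact hw' (by rw [h01 _ h, h01 _ (hsupp h)])
  have hfw' : f w' = 1 := h01 _ (by rwa [hgw', ne_comm] at hw')
  apply hsupp (a := w + w') (by simpa [hgw'] using hw)
  rw [map_add, h01 _ (hsupp hw), hfw']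
  rfl

theorem AddMonoidHom.sum_mul_eq_zero_of_four_lt_card [AddCommGroup W] [Module (ZMod 2) W]
    [Fintype W] (hW : 4 < Fintype.card W) (f g : W →+ ZMod 2) : ∑ w, f w * g w = 0 := by
  obtain ⟨a, b, hab, hfg⟩ :=
    Fintype.exists_ne_map_eq_of_card_lt (fun w => (f w, g w)) (by simpa using hW)
  obtain ⟨hfab, hgab⟩ := Prod.mk.inj hfg
  set k := a - b
  have hk : k ≠ 0 := sub_ne_zero.mpr hab
  have hfk : f k = 0 := by rw [map_sub, hfab, sub_self]
  have hgk : g k = 0 := by rw [map_sub, hgab, sub_self]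
  have hkk : k + k = 0 := by rw [← two_smul (ZMod 2) k, show (2 : ZMod 2) = 0 from rfl, zero_smul]
  refine Finset.sum_ninvolution (· + k) (fun w => ?_) (fun w _ => by simpa using hk)
    (fun _ => mem_univ _) (fun w => by rw [add_assoc, hkk, add_zero])
  rw [map_add, map_add, hfk, hgk, add_zero, add_zero]
  exact CharTwo.add_self_eq_zero _

end LinearFunctionalsOverF2

section CodesOfLinearFunctionals

variable {ι : Type} {W : Type*}

theorem isMinimalCode_of_forall_eq_comp [AddGroup W] (e : ι ≃ W) {C : Set (ι → ZMod 2)}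
    (hC : ∀ c ∈ C, ∃ f : W →+ ZMod 2, c = f ∘ e) : IsMinimalCode C := by
  intro u hu hu0 v hv hv0 hsupp
  obtain ⟨f, rfl⟩ := hC u hu
  obtain ⟨g, rfl⟩ := hC v hv
  have hg : g ≠ 0 := by
    rintro rfl
    exact hv0 rfl
  have hgf : support g ⊆ support f := fun w hw =>
    by simpa using hsupp (a := e.symm w) (by simpa using hw)
  rw [AddMonoidHom.eq_of_support_subset_of_ne_zero hg hgf]

theorem isSelfOrthogonal_of_forall_eq_comp [Fintype ι] [AddCommGroup W] [Module (ZMod 2) W]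
    (e : ι ≃ W) (hι : 4 < Fintype.card ι) {C : Set (ι → ZMod 2)}
    (hC : ∀ c ∈ C, ∃ f : W →+ ZMod 2, c = f ∘ e) : IsSelfOrthogonal C := by
  intro c hc c' hc'
  obtain ⟨f, rfl⟩ := hC c hc
  obtain ⟨g, rfl⟩ := hC c' hc'
  have : Fintype W := Fintype.ofEquiv ι e
  exact (Fintype.sum_equiv e _ (fun w => f w * g w) fun _ => rfl).trans
    (AddMonoidHom.sum_mul_eq_zero_of_four_lt_card (Fintype.card_congr e ▸ hι) f g)

end CodesOfLinearFunctionals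

section CodeOfSubspaces

variable {m : ℕ} {D₁ D₂ D₃ : Finset (V m)} {S₁ S₂ S₃ : Submodule (ZMod 2) (V m)}

def subspaceEquiv (h₁ : ∀ v, v ∈ D₁ ↔ v ∈ S₁) (h₂ : ∀ v, v ∈ D₂ ↔ v ∈ S₂)
    (h₃ : ∀ v, v ∈ D₃ ↔ v ∈ S₃) :
    ({x // x ∈ D₁} × {x // x ∈ D₂} × {x // x ∈ D₃}) ≃ S₁ × S₂ × S₃ :=
  (Equiv.subtypeEquivRight h₁).prodCongr
    ((Equiv.subtypeEquivRight h₂).prodCongr (Equiv.subtypeEquivRight h₃))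

theorem codeMap_eq_comp_subspaceEquiv (h₁ : ∀ v, v ∈ D₁ ↔ v ∈ S₁) (h₂ : ∀ v, v ∈ D₂ ↔ v ∈ S₂)
    (h₃ : ∀ v, v ∈ D₃ ↔ v ∈ S₃) (p : V m × V m × V m) :
    ∃ f : S₁ × S₂ × S₃ →+ ZMod 2, codeMap D₁ D₂ D₃ p = f ∘ subspaceEquiv h₁ h₂ h₃ := by
  obtain ⟨α, β, γ⟩ := p
  have hdot : ∀ x y : V m, dot x y = x ⬝ᵥ y := fun _ _ => rfl
  refine ⟨AddMonoidHom.mk' (fun w => dot α w.1 + dot (β + γ) w.2.1 + dot β w.2.2) ?_, ?_⟩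
  · intro w w'
    simp only [Prod.fst_add, Prod.snd_add, Submodule.coe_add, hdot, dotProduct_add]
    ring
  · funext d
    simp [codeMap_apply, subspaceEquiv]

end CodeOfSubspaces

section SimplicialComplexOfASet

variable {m : ℕ}

theorem mem_Δ_iff_mem_pi (L : Finset (Fin m)) (v : V m) :
    v ∈ Δ L ↔ v ∈ Submodule.pi (↑Lᶜ : Set (Fin m)) fun _ => (⊥ : Submodule (ZMod 2) (ZMod 2)) := by
  simp only [Δ, supp, mem_filter, mem_univ, true_and, subset_iff, Submodule.mem_pi, coe_compl,
    Set.mem_compl_iff, mem_coe, Submodule.mem_bot]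
  exact forall_congr' fun i => not_imp_comm

theorem card_Δ (L : Finset (Fin m)) : (Δ L).card = 2 ^ L.card := by
  have : Δ L = Fintype.piFinset fun i => if i ∈ L then univ else {0} := by
    ext v
    simp only [mem_Δ_iff_mem_pi, Submodule.mem_pi, Fintype.mem_piFinset, coe_compl,
      Set.mem_compl_iff, mem_coe, Submodule.mem_bot]
    refine forall_congr' fun i => ?_
    split_ifs with hi <;> simp [hi]
  rw [this, Fintype.card_piFinset]
  simp [apply_ite Finset.card, Finset.prod_ite_mem]

end SimplicialComplexOfASet

theorem stmt14_general (m : ℕ) (L M N : Finset (Fin m)) :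
    IsMinimalCode (SetLike.coe (LinearMap.range (codeMap (Δ L) (Δ M) (Δ N)))) ∧
    (3 ≤ L.card + M.card + N.card →
      IsSelfOrthogonal (SetLike.coe (LinearMap.range (codeMap (Δ L) (Δ M) (Δ N))))) := by
  set e := subspaceEquiv (mem_Δ_iff_mem_pi L) (mem_Δ_iff_mem_pi M) (mem_Δ_iff_mem_pi N)
  have hcode : ∀ c ∈ SetLike.coe (LinearMap.range (codeMap (Δ L) (Δ M) (Δ N))),
      ∃ f : _ →+ ZMod 2, c = f ∘ e := by
    rintro _ ⟨p, rfl⟩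
    exact codeMap_eq_comp_subspaceEquiv _ _ _ p
  refine ⟨isMinimalCode_of_forall_eq_comp _ hcode, fun h3 =>
    isSelfOrthogonal_of_forall_eq_comp _ ?_ hcode⟩
  calc 4 < 2 ^ 3 := by norm_num
    _ ≤ 2 ^ (L.card + M.card + N.card) := Nat.pow_le_pow_right two_pos h3
    _ = _ := by simp [Fintype.card_prod, card_Δ, pow_add, mul_assoc]

/-- Theorem 4.2, row 1: `C(Δ_L, Δ_M, Δ_N)` is always minimal, and it is
self-orthogonal whenever `|L|+|M|+|N| ≥ 3`. -/
theorem stmt14 (m : ℕ) (hm : 1 ≤ m) (L M N : Finset (Fin m))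
    (hs : 1 ≤ L.card + M.card + N.card) :
    IsMinimalCode (SetLike.coe (LinearMap.range (codeMap (Δ L) (Δ M) (Δ N)))) ∧
    (3 ≤ L.card + M.card + N.card →
      IsSelfOrthogonal (SetLike.coe (LinearMap.range (codeMap (Δ L) (Δ M) (Δ N))))) :=
  stmt14_general m L M N
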